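/- Let γ ∈ (1, 8/5) and 0 < z < z₀(γ) = (22−5γ)/125. Set w(z) = √(1 − 2(γ+2)z + (γ−2)²z²), V_6 = (−1+(γ−2)z−w(z))/2, and V_8 = (−1+(γ−2)z+w(z))/2. Then (1+V_8+γz)²(1+V_6+2γz)³ < (1+V_6+γz)²(1+V_8+2γz)³, i.e. ((1+V_8+γz)/(1+V_6+γz))² < ((1+V_8+2γz)/(1+V_6+2γz))³. -/
import Mathlib


/-- `w(z) = √(1 − 2(γ+2)z + (γ−2)²z²)`. -/
noncomputable def w (γ z : ℝ) : ℝ :=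
  Real.sqrt (1 - 2 * (γ + 2) * z + (γ - 2) ^ 2 * z ^ 2)

/-- `V_6 = (−1+(γ−2)z−w(z))/2`. -/
noncomputable def V6 (γ z : ℝ) : ℝ := (-1 + (γ - 2) * z - w γ z) / 2

/-- `V_8 = (−1+(γ−2)z+w(z))/2`. -/
noncomputable def V8 (γ z : ℝ) : ℝ := (-1 + (γ - 2) * z + w γ z) / 2

/-- For `γ ∈ (1, 8/5)` and `0 < z < z₀(γ) = (22−5γ)/125`:
`(1+V_8+γz)²(1+V_6+2γz)³ < (1+V_6+γz)²(1+V_8+2γz)³`, i.e.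
`((1+V_8+γz)/(1+V_6+γz))² < ((1+V_8+2γz)/(1+V_6+2γz))³`. -/
theorem ratio_ineq (γ z : ℝ) (h1 : 1 < γ) (h2 : γ < 8 / 5)
    (hz0 : 0 < z) (hz : z < (22 - 5 * γ) / 125) :
    (1 + V8 γ z + γ * z) ^ 2 * (1 + V6 γ z + 2 * γ * z) ^ 3 <
      (1 + V6 γ z + γ * z) ^ 2 * (1 + V8 γ z + 2 * γ * z) ^ 3 ∧
    ((1 + V8 γ z + γ * z) / (1 + V6 γ z + γ * z)) ^ 2 <
      ((1 + V8 γ z + 2 * γ * z) / (1 + V6 γ z + 2 * γ * z)) ^ 3 := by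
  have hγ0 : (0 : ℝ) < γ := by linarith
  have hz1 : z < 1 / 5 := by nlinarith
  have hdpos : 0 < 1 - 2 * (γ + 2) * z + (γ - 2) ^ 2 * z ^ 2 := by
    nlinarith [sq_nonneg ((γ - 2) * z), sq_nonneg (γ - 6 / 5), mul_pos hz0 hz0,
      mul_lt_mul_of_pos_left hz (by linarith : (0:ℝ) < 2 * (γ + 2))]
  have hWpos : 0 < w γ z := Real.sqrt_pos.mpr hdpos
  have hW2 : (w γ z) ^ 2 = 1 - 2 * (γ + 2) * z + (γ - 2) ^ 2 * z ^ 2 :=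
    Real.sq_sqrt hdpos.le
  have ha : 0 < 1 + (3 * γ - 2) * z := by nlinarith
  have hwa : w γ z < 1 + (3 * γ - 2) * z := by
    rw [show w γ z = Real.sqrt (1 - 2 * (γ + 2) * z + (γ - 2) ^ 2 * z ^ 2) from rfl]
    rw [show (1 : ℝ) + (3 * γ - 2) * z = Real.sqrt ((1 + (3 * γ - 2) * z) ^ 2) from
      (Real.sqrt_sq ha.le).symm]
    apply Real.sqrt_lt_sqrt hdpos.le
    nlinarith [mul_pos hz0 hz0, mul_pos hγ0 hz0]
  have hX6 : 0 < 1 + V6 γ z + γ * z := by unfold V6; linarith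
  have hY6 : 0 < 1 + V6 γ z + 2 * γ * z := by
    have := mul_pos hγ0 hz0; unfold V6; linarith
  have hH : 0 < 4 - 8 * z + 4 * z ^ 2 + γ * z - 5 * γ ^ 2 * z ^ 2 := by
    nlinarith [sq_nonneg (1 - z), mul_pos hγ0 hz0, sq_nonneg (γ - 11 / 5),
      mul_pos (mul_pos hγ0 hγ0) (mul_pos hz0 hz0)]
  have key : (1 + V6 γ z + γ * z) ^ 2 * (1 + V8 γ z + 2 * γ * z) ^ 3 -
      (1 + V8 γ z + γ * z) ^ 2 * (1 + V6 γ z + 2 * γ * z) ^ 3 =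
      w γ z * (γ ^ 2 * z ^ 2 * (4 - 8 * z + 4 * z ^ 2 + γ * z - 5 * γ ^ 2 * z ^ 2)) := by
    unfold V6 V8
    linear_combination (w γ z * ((w γ z) ^ 2 + (1 - 2 * (γ + 2) * z + (γ - 2) ^ 2 * z ^ 2)
      + ((1 + (3 * γ - 2) * z) ^ 2 - 6 * (1 + (3 * γ - 2) * z) * (1 + (5 * γ - 2) * z)
        + 3 * (1 + (5 * γ - 2) * z) ^ 2)) / 16) * hW2
  have hpos : 0 < w γ z * (γ ^ 2 * z ^ 2 * (4 - 8 * z + 4 * z ^ 2 + γ * z - 5 * γ ^ 2 * z ^ 2)) := by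
    apply mul_pos hWpos
    apply mul_pos (mul_pos (pow_pos hγ0 2) (pow_pos hz0 2)) hH
  have hmain : (1 + V8 γ z + γ * z) ^ 2 * (1 + V6 γ z + 2 * γ * z) ^ 3 <
      (1 + V6 γ z + γ * z) ^ 2 * (1 + V8 γ z + 2 * γ * z) ^ 3 := by linarith
  refine ⟨hmain, ?_⟩
  rw [div_pow, div_pow, div_lt_div_iff₀ (by positivity) (by positivity)]
  exact hmain.trans_eq (mul_comm _ _)
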